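/- For a set of contacts with stacked Jacobian J and friction data, the set-valued map F_C(v) = hull{ f_c : c ∈ C, f_c ∈ F_c(v), J_{n,c} v ≤ 0 }, where each F_c(v) = { J_{n,c}ᵀ − μ_c J_{t,c}ᵀ u : u ∈ U(J_{t,c} v) } (frictionless if μ_c = 0), is upper semi-continuous with nonempty, convex, compact values on the set { v : ∃ c ∈ C, J_{n,c} v ≤ 0 }. -/

import Mathlib

open Filter Topology Set

open scoped Classical in
/-- The set-valued unit direction function. -/
noncomputable def unitDir {n : ℕ} (v : EuclideanSpace ℝ (Fin n)) :
    Set (EuclideanSpace ℝ (Fin n)) :=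
  if v = 0 then Metric.closedBall 0 1 else {‖v‖⁻¹ • v}

/-- The set of net (possibly frictional) forces for a single contact `c`. -/
noncomputable def contactF {n : ℕ} (jn : EuclideanSpace ℝ (Fin n))
    (Jt : EuclideanSpace ℝ (Fin n) →L[ℝ] EuclideanSpace ℝ (Fin 2)) (μ : ℝ)
    (v : EuclideanSpace ℝ (Fin n)) : Set (EuclideanSpace ℝ (Fin n)) :=
  {f | ∃ u ∈ unitDir (Jt v), f = jn - μ • (ContinuousLinearMap.adjoint Jt) u}

/-- The multi-contact net force map `F_C(v)`: the convex hull of all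
single-contact net forces of non-separating contacts. -/
noncomputable def multiF {n : ℕ} {ι : Type*} [Fintype ι]
    (jn : ι → EuclideanSpace ℝ (Fin n))
    (Jt : ι → (EuclideanSpace ℝ (Fin n) →L[ℝ] EuclideanSpace ℝ (Fin 2)))
    (μ : ι → ℝ) (v : EuclideanSpace ℝ (Fin n)) : Set (EuclideanSpace ℝ (Fin n)) :=
  convexHull ℝ (⋃ c ∈ {c : ι | (inner ℝ (jn c) v : ℝ) ≤ 0}, contactF (jn c) (Jt c) (μ c) v)

section auxgen
variable {E : Type*} [NormedAddCommGroup E] [NormedSpace ℝ E]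

lemma isCompact_convexJoin' {s t : Set E} (hs : IsCompact s) (ht : IsCompact t) :
    IsCompact (convexJoin ℝ s t) := by
  have heq : convexJoin ℝ s t =
      (fun p : ℝ × E × E => (1 - p.1) • p.2.1 + p.1 • p.2.2) '' (Icc (0:ℝ) 1 ×ˢ s ×ˢ t) := by
    ext x
    constructor
    · intro hx
      rw [mem_convexJoin] at hx
      obtain ⟨a, ha, b, hb, hseg⟩ := hx
      rw [segment_eq_image] at hseg
      obtain ⟨θ, hθ, hx⟩ := hseg
      exact ⟨⟨θ, a, b⟩, ⟨hθ, ha, hb⟩, hx⟩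
    · rintro ⟨⟨θ, a, b⟩, ⟨hθ, ha, hb⟩, rfl⟩
      rw [mem_convexJoin]
      refine ⟨a, ha, b, hb, ?_⟩
      rw [segment_eq_image]
      exact ⟨θ, hθ, rfl⟩
  rw [heq]
  apply IsCompact.image (isCompact_Icc.prod (hs.prod ht))
  fun_prop

lemma isCompact_convexHull_biUnion' {ι : Type*} (I : Finset ι) (S : ι → Set E)
    (h : ∀ c ∈ I, IsCompact (S c) ∧ Convex ℝ (S c) ∧ (S c).Nonempty) :
    IsCompact (convexHull ℝ (⋃ c ∈ I, S c)) := by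
  classical
  induction I using Finset.induction with
  | empty => simp
  | @insert a I ha ih =>
    have hmem : ∀ c ∈ I, IsCompact (S c) ∧ Convex ℝ (S c) ∧ (S c).Nonempty :=
      fun c hc => h c (Finset.mem_insert_of_mem hc)
    obtain ⟨hSa, hSac, hSan⟩ := h a (Finset.mem_insert_self a I)
    rw [Finset.set_biUnion_insert]
    rcases I.eq_empty_or_nonempty with rfl | hI
    · simpa [hSac.convexHull_eq] using hSa
    · have hIne : (⋃ c ∈ I, S c).Nonempty := by
        obtain ⟨c, hc⟩ := hI
        obtain ⟨x, hx⟩ := (hmem c hc).2.2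
        exact ⟨x, mem_biUnion hc hx⟩
      rw [convexHull_union hSan hIne]
      exact isCompact_convexJoin' (by rwa [hSac.convexHull_eq]) (ih hmem)
end auxgen

lemma unitDir_subset_ball {n : ℕ} (v : EuclideanSpace ℝ (Fin n)) :
    unitDir v ⊆ Metric.closedBall 0 1 := by
  unfold unitDir
  split_ifs with h
  · exact subset_rfl
  · intro x hx
    simp only [Set.mem_singleton_iff] at hx
    subst hx
    simp [Metric.mem_closedBall, norm_smul, inv_mul_cancel₀ (norm_ne_zero_iff.mpr h)]

lemma unitDir_nonempty {n : ℕ} (v : EuclideanSpace ℝ (Fin n)) : (unitDir v).Nonempty := by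
  unfold unitDir
  split_ifs with h
  · exact ⟨0, by simp⟩
  · exact ⟨_, rfl⟩

lemma unitDir_convex {n : ℕ} (v : EuclideanSpace ℝ (Fin n)) : Convex ℝ (unitDir v) := by
  unfold unitDir
  split_ifs with h
  · exact convex_closedBall 0 1
  · exact convex_singleton _

lemma unitDir_compact {n : ℕ} (v : EuclideanSpace ℝ (Fin n)) : IsCompact (unitDir v) := by
  unfold unitDir
  split_ifs with h
  · exact isCompact_closedBall 0 1
  · exact isCompact_singleton

lemma unitDir_of_ne {n : ℕ} {v : EuclideanSpace ℝ (Fin n)} (h : v ≠ 0) :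
    unitDir v = {‖v‖⁻¹ • v} := by
  unfold unitDir; rw [if_neg h]

lemma unitDir_zero {n : ℕ} : unitDir (0 : EuclideanSpace ℝ (Fin n)) = Metric.closedBall 0 1 := by
  unfold unitDir; rw [if_pos rfl]

lemma contactF_eq_image {n : ℕ} (jn : EuclideanSpace ℝ (Fin n))
    (Jt : EuclideanSpace ℝ (Fin n) →L[ℝ] EuclideanSpace ℝ (Fin 2)) (μ : ℝ)
    (v : EuclideanSpace ℝ (Fin n)) :
    contactF jn Jt μ v
      = (fun u => jn - μ • (ContinuousLinearMap.adjoint Jt) u) '' unitDir (Jt v) := by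
  ext f
  simp [contactF, Set.image, eq_comm]

lemma contactF_compact {n : ℕ} (jn : EuclideanSpace ℝ (Fin n))
    (Jt : EuclideanSpace ℝ (Fin n) →L[ℝ] EuclideanSpace ℝ (Fin 2)) (μ : ℝ)
    (v : EuclideanSpace ℝ (Fin n)) : IsCompact (contactF jn Jt μ v) := by
  rw [contactF_eq_image]
  exact (unitDir_compact _).image (by fun_prop)

lemma contactF_nonempty {n : ℕ} (jn : EuclideanSpace ℝ (Fin n))
    (Jt : EuclideanSpace ℝ (Fin n) →L[ℝ] EuclideanSpace ℝ (Fin 2)) (μ : ℝ)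
    (v : EuclideanSpace ℝ (Fin n)) : (contactF jn Jt μ v).Nonempty := by
  rw [contactF_eq_image]
  exact (unitDir_nonempty _).image _

lemma contactF_convex {n : ℕ} (jn : EuclideanSpace ℝ (Fin n))
    (Jt : EuclideanSpace ℝ (Fin n) →L[ℝ] EuclideanSpace ℝ (Fin 2)) (μ : ℝ)
    (v : EuclideanSpace ℝ (Fin n)) : Convex ℝ (contactF jn Jt μ v) := by
  rintro x ⟨u₁, hu₁, rfl⟩ y ⟨u₂, hu₂, rfl⟩ a b ha hb hab
  refine ⟨a • u₁ + b • u₂, unitDir_convex _ hu₁ hu₂ ha hb hab, ?_⟩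
  rw [map_add, map_smul, map_smul]
  linear_combination (norm := module) hab • jn

/-- `F_C` is upper semi-continuous with nonempty, convex, compact values on the
set of velocities for which at least one contact is non-separating. -/
theorem multiF_usc_nonempty_convex_compact {n : ℕ} {ι : Type*} [Fintype ι]
    (jn : ι → EuclideanSpace ℝ (Fin n))
    (Jt : ι → (EuclideanSpace ℝ (Fin n) →L[ℝ] EuclideanSpace ℝ (Fin 2)))
    (μ : ι → ℝ) (hμ : ∀ c, 0 ≤ μ c)
    (v : EuclideanSpace ℝ (Fin n)) (hv : ∃ c, (inner ℝ (jn c) v : ℝ) ≤ 0) :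
    (multiF jn Jt μ v).Nonempty ∧
    Convex ℝ (multiF jn Jt μ v) ∧
    IsCompact (multiF jn Jt μ v) ∧
    (∀ (vs fs : ℕ → EuclideanSpace ℝ (Fin n)) (f : EuclideanSpace ℝ (Fin n)),
      Tendsto vs atTop (𝓝 v) → Tendsto fs atTop (𝓝 f) →
      (∀ k, fs k ∈ multiF jn Jt μ (vs k)) → f ∈ multiF jn Jt μ v) := by
  classical
  set A : Set (EuclideanSpace ℝ (Fin n)) :=
    ⋃ c ∈ {c : ι | (inner ℝ (jn c) v : ℝ) ≤ 0}, contactF (jn c) (Jt c) (μ c) v with hA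
  have hAeqFinset : A = ⋃ c ∈ ({c : ι | (inner ℝ (jn c) v : ℝ) ≤ 0}.toFinset), contactF (jn c) (Jt c) (μ c) v := by
    rw [hA]
    congr 1
    ext c
    simp
  have hAhullCompact : IsCompact (convexHull ℝ A) := by
    rw [hAeqFinset]
    exact isCompact_convexHull_biUnion' _ _
      (fun c _ => ⟨contactF_compact _ _ _ _, contactF_convex _ _ _ _, contactF_nonempty _ _ _ _⟩)
  have hmultiF : multiF jn Jt μ v = convexHull ℝ A := rfl
  obtain ⟨c₀, hc₀⟩ := hv
  have hAne : A.Nonempty := by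
    obtain ⟨x, hx⟩ := contactF_nonempty (jn c₀) (Jt c₀) (μ c₀) v
    exact ⟨x, mem_biUnion hc₀ hx⟩
  refine ⟨hAne.mono (subset_convexHull ℝ A), convex_convexHull ℝ A, hAhullCompact, ?_⟩
  intro vs fs f hvs hfs hmem
  rw [hmultiF, ← hAhullCompact.isClosed.closure_eq, Metric.mem_closure_iff]
  intro ε hε
  have hδ : (0:ℝ) < ε/2 := by linarith
  -- the per-contact upper semicontinuity claim
  have key : ∀ c : ι, ∀ᶠ k in atTop,
      ((inner ℝ (jn c) (vs k) : ℝ) ≤ 0 →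
        contactF (jn c) (Jt c) (μ c) (vs k) ⊆ Metric.thickening (ε/2) A) := by
    intro c
    by_cases hc : (inner ℝ (jn c) v : ℝ) ≤ 0
    · have hsub : contactF (jn c) (Jt c) (μ c) v ⊆ A := by
        rw [hA]
        exact subset_biUnion_of_mem (u := fun c => contactF (jn c) (Jt c) (μ c) v) (show c ∈ {c : ι | (inner ℝ (jn c) v : ℝ) ≤ 0} from hc)
      by_cases hJt : Jt c v = 0
      · refine Eventually.of_forall fun k _ => ?_
        rintro y ⟨u, hu, rfl⟩
        have hy : jn c - μ c • (ContinuousLinearMap.adjoint (Jt c)) u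
            ∈ contactF (jn c) (Jt c) (μ c) v := by
          refine ⟨u, ?_, rfl⟩
          rw [hJt, unitDir_zero]
          exact unitDir_subset_ball _ hu
        exact Metric.self_subset_thickening hδ _ (hsub hy)
      · have htend : Tendsto (fun k => Jt c (vs k)) atTop (𝓝 (Jt c v)) :=
          ((Jt c).continuous.tendsto v).comp hvs
        have hne : ∀ᶠ k in atTop, Jt c (vs k) ≠ 0 := htend.eventually_ne hJt
        have hpt : Tendsto
            (fun k => jn c - μ c • (ContinuousLinearMap.adjoint (Jt c))
              (‖Jt c (vs k)‖⁻¹ • Jt c (vs k))) atTop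
            (𝓝 (jn c - μ c • (ContinuousLinearMap.adjoint (Jt c)) (‖Jt c v‖⁻¹ • Jt c v))) := by
          have h1 : Tendsto (fun k => ‖Jt c (vs k)‖⁻¹ • Jt c (vs k)) atTop
              (𝓝 (‖Jt c v‖⁻¹ • Jt c v)) := by
            exact Tendsto.smul ((htend.norm).inv₀ (norm_ne_zero_iff.mpr hJt)) htend
          exact tendsto_const_nhds.sub
            ((((ContinuousLinearMap.adjoint (Jt c)).continuous.tendsto _).comp h1).const_smul _)
        have hdist := (Metric.tendsto_nhds.mp hpt) (ε/2) hδ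
        filter_upwards [hne, hdist] with k hkne hkdist
        rintro _ y ⟨u, hu, rfl⟩
        rw [unitDir_of_ne hkne, Set.mem_singleton_iff] at hu
        subst hu
        refine Metric.mem_thickening_iff.mpr
          ⟨jn c - μ c • (ContinuousLinearMap.adjoint (Jt c)) (‖Jt c v‖⁻¹ • Jt c v), ?_, hkdist⟩
        refine hsub ⟨‖Jt c v‖⁻¹ • Jt c v, ?_, rfl⟩
        rw [unitDir_of_ne hJt]
        rfl
    · push_neg at hc
      have htend : Tendsto (fun k => (inner ℝ (jn c) (vs k) : ℝ)) atTop (𝓝 (inner ℝ (jn c) v)) :=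
        Tendsto.inner tendsto_const_nhds hvs
      have : ∀ᶠ k in atTop, (0:ℝ) < inner ℝ (jn c) (vs k) :=
        htend.eventually (eventually_gt_nhds hc)
      filter_upwards [this] with k hk hk'
      exact absurd hk' (not_le.mpr hk)
  have hall : ∀ᶠ k in atTop, ∀ c : ι,
      ((inner ℝ (jn c) (vs k) : ℝ) ≤ 0 →
        contactF (jn c) (Jt c) (μ c) (vs k) ⊆ Metric.thickening (ε/2) A) :=
    eventually_all.mpr key
  have hfsdist : ∀ᶠ k in atTop, dist f (fs k) < ε/2 := by
    have := (Metric.tendsto_nhds.mp hfs) (ε/2) hδ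
    filter_upwards [this] with k hk
    rw [dist_comm]; exact hk
  obtain ⟨k, hk, hkd⟩ := (hall.and hfsdist).exists
  -- at step k : fs k ∈ convexHull of a set contained in the thickening of convexHull A
  have hthick : Convex ℝ (Metric.thickening (ε/2) (convexHull ℝ A)) :=
    (convex_convexHull ℝ A).thickening _
  have hsubk : (⋃ c ∈ {c : ι | (inner ℝ (jn c) (vs k) : ℝ) ≤ 0},
      contactF (jn c) (Jt c) (μ c) (vs k)) ⊆ Metric.thickening (ε/2) (convexHull ℝ A) := by
    intro y hy
    obtain ⟨c, hc, hyc⟩ := Set.mem_iUnion₂.mp hy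
    exact Metric.thickening_subset_of_subset _ (subset_convexHull ℝ A) (hk c hc hyc)
  have hfk : fs k ∈ Metric.thickening (ε/2) (convexHull ℝ A) :=
    convexHull_min hsubk hthick (hmem k)
  obtain ⟨g, hg, hgd⟩ := Metric.mem_thickening_iff.mp hfk
  exact ⟨g, hg, lt_of_le_of_lt (dist_triangle f (fs k) g) (by linarith)⟩
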